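/- arXiv:2603.22199 — 2 statements merged into one kernel-verified Lean document; each statement's English description precedes it below -/
import Mathlib

section
/- Let R be a commutative ring and M a finitely presented R-module. If for every prime ideal p the localization M_p is a free R_p-module, then M is locally free: every prime p has an element f ∉ p such that M_f is a free R_f-module. -/
/-- Let `R` be a commutative ring and `M` a finitely presented `R`-module. If the
localization of `M` at every prime ideal is free, then `M` is locally free: for every
prime `p` there is an `f ∉ p` such that `M_f` is free over `R_f`. -/
theorem stmt_4 (R : Type*) [CommRing R] (M : Type*) [AddCommGroup M] [Module R M]
    [Module.FinitePresentation R M]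
    (h : ∀ (p : Ideal R) [p.IsPrime],
      Module.Free (Localization.AtPrime p) (LocalizedModule p.primeCompl M)) :
    ∀ (p : Ideal R) [p.IsPrime], ∃ f : R, f ∉ p ∧
      Module.Free (Localization.Away f) (LocalizedModule (Submonoid.powers f) M) := by
  intro p hp
  have := h p
  obtain ⟨f, hf, hf', hf''⟩ := Module.FinitePresentation.exists_free_localizedModule_powers
    p.primeCompl (LocalizedModule.mkLinearMap p.primeCompl M) (Localization.AtPrime p)
  exact ⟨f, hf, hf'⟩
end

section
/- Conormal modules are compatible with flat base change: let A be a commutative ring, I ⊆ A an ideal, and A → A' a flat ring map, with I' := I·A'. Then there is a natural isomorphism of A'/I'-modules (I/I²) ⊗_{A/I} (A'/I') ≅ I'/I'². -/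
/-! Both conormal modules are base changes of the ideal itself: `I/I² ≅ (A/I) ⊗_A I` and
`I'/I'² ≅ (A'/I') ⊗_{A'} I'`. Flatness of `A'` identifies `I' = I·A'` with `A' ⊗_A I`, and
cancelling base changes turns both sides into `(A'/I') ⊗_A I`. -/

open TensorProduct

namespace Ideal

section

variable {R : Type*} [CommRing R] (I : Ideal R)

noncomputable def quotTensorEquivCotangent : ((R ⧸ I) ⊗[R] I) ≃ₗ[R ⧸ I] I.Cotangent :=
  -- the ascription puts `Cotangent`'s own `R`-module structure on the target, which is the one
  -- carrying the `IsScalarTower R (R ⧸ I)` instance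
  let e : (R ⧸ I) ⊗[R] I ≃ₗ[R] I.Cotangent := quotTensorEquivQuotSMul I I
  e.extendScalarsOfSurjective Quotient.mk_surjective

end

section

variable {A A' : Type*} [CommRing A] [CommRing A'] [Algebra A A'] [Module.Flat A A'] (I : Ideal A)

noncomputable def tensorEquivMapOfFlat :
    (A' ⊗[A] I) ≃ₗ[A'] I.map (algebraMap A A') := by
  let f : A' ⊗[A] I →ₗ[A'] A' :=
    (AlgebraTensorModule.rid A A' A').toLinearMap ∘ₗ I.subtype.baseChange A'
  have hf : Function.Injective f :=
    (AlgebraTensorModule.rid A A' A').injective.comp <|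
      Module.Flat.lTensor_preserves_injective_linearMap I.subtype Subtype.val_injective
  have hrange : LinearMap.range f = I.map (algebraMap A A') := by
    apply le_antisymm
    · rintro _ ⟨y, rfl⟩
      induction y using TensorProduct.induction_on with
      | zero => simp
      | tmul x i =>
        change (i : A) • x ∈ _
        rw [Algebra.smul_def]
        exact mul_mem_right _ _ (mem_map_of_mem _ i.2)
      | add a b ha hb => rw [map_add]; exact add_mem ha hb
    · rw [Ideal.map, span_le]
      rintro _ ⟨i, hi, rfl⟩
      exact ⟨1 ⊗ₜ ⟨i, hi⟩, by simp [f, Algebra.smul_def]⟩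
  exact (LinearEquiv.ofInjective f hf).trans (LinearEquiv.ofEq _ _ hrange)

variable [Algebra (A ⧸ I) (A' ⧸ I.map (algebraMap A A'))]
    [IsScalarTower A (A ⧸ I) (A' ⧸ I.map (algebraMap A A'))]

noncomputable def quotMapTensorCotangentEquiv :
    ((A' ⧸ I.map (algebraMap A A')) ⊗[A ⧸ I] I.Cotangent)
      ≃ₗ[A' ⧸ I.map (algebraMap A A')] (I.map (algebraMap A A')).Cotangent :=
  let B := A' ⧸ I.map (algebraMap A A')
  AlgebraTensorModule.congr (.refl B B) (quotTensorEquivCotangent I).symm ≪≫ₗ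
    AlgebraTensorModule.cancelBaseChange A (A ⧸ I) B B I ≪≫ₗ
    (AlgebraTensorModule.cancelBaseChange A A' B B I).symm ≪≫ₗ
    AlgebraTensorModule.congr (.refl B B) (tensorEquivMapOfFlat I) ≪≫ₗ
    quotTensorEquivCotangent _

end

end Ideal

/-- Conormal modules are compatible with flat base change: if `A → A'` is a flat map of
commutative rings, `I ⊆ A` an ideal and `I' = I·A'` its extension, then there is an
isomorphism of `A'/I'`-modules `(A'/I') ⊗_{A/I} (I/I²) ≅ I'/I'²` (where `A'/I'` is an
`A/I`-algebra via the induced map). -/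
theorem stmt_15 (A A' : Type u) [CommRing A] [CommRing A'] [Algebra A A']
    [Module.Flat A A'] (I : Ideal A) :
    letI : Algebra (A ⧸ I) (A' ⧸ I.map (algebraMap A A')) :=
      (Ideal.quotientMap (I.map (algebraMap A A')) (algebraMap A A')
        Ideal.le_comap_map).toAlgebra
    Nonempty
      (((A' ⧸ I.map (algebraMap A A')) ⊗[A ⧸ I] I.Cotangent)
        ≃ₗ[A' ⧸ I.map (algebraMap A A')] (I.map (algebraMap A A')).Cotangent) := by
  let _ : Algebra (A ⧸ I) (A' ⧸ I.map (algebraMap A A')) :=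
    (Ideal.quotientMap (I.map (algebraMap A A')) (algebraMap A A') Ideal.le_comap_map).toAlgebra
  have : IsScalarTower A (A ⧸ I) (A' ⧸ I.map (algebraMap A A')) :=
    IsScalarTower.of_algebraMap_eq fun _ => rfl
  exact ⟨I.quotMapTensorCotangentEquiv⟩
end
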